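/- For n ≥ 2, the set of ordered multiplicity lists realized by matrices in S_L(Kₙ) is exactly the set of lists (m₁, ..., m_q) of positive integers with m₁ = 1 and m₁ + m₂ + ... + m_q = n. -/

import Mathlib

open Matrix Polynomial Finset


lemma my_charpoly_mul_mul {n : Type*} [Fintype n] [DecidableEq n] (U V D : Matrix n n ℝ)
    (h : U * V = 1) : (U * D * V).charpoly = D.charpoly := by
  have key : charmatrix (U * D * V) =
      (C : ℝ →+* ℝ[X]).mapMatrix U * charmatrix D * (C : ℝ →+* ℝ[X]).mapMatrix V := by
    unfold charmatrix
    rw [mul_sub, sub_mul]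
    congr 1
    · -- mapU * scalar X * mapV = scalar X
      have h1 : (C : ℝ →+* ℝ[X]).mapMatrix U * Matrix.scalar n (X : ℝ[X]) =
          Matrix.scalar n (X : ℝ[X]) * (C : ℝ →+* ℝ[X]).mapMatrix U := by
        rw [Matrix.scalar_commute]
        intro r'
        exact Commute.all _ _
      rw [h1, mul_assoc, ← _root_.map_mul, h, _root_.map_one, mul_one]
    · rw [← _root_.map_mul, ← _root_.map_mul]
  have h3 : (C : ℝ →+* ℝ[X]).mapMatrix U * (C : ℝ →+* ℝ[X]).mapMatrix V = 1 := by
    rw [← _root_.map_mul, h, _root_.map_one]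
  have h4 : ((C : ℝ →+* ℝ[X]).mapMatrix U).det * ((C : ℝ →+* ℝ[X]).mapMatrix V).det = 1 := by
    rw [← det_mul, h3, det_one]
  rw [Matrix.charpoly, key, det_mul, det_mul, Matrix.charpoly]
  calc ((C : ℝ →+* ℝ[X]).mapMatrix U).det * (charmatrix D).det *
      ((C : ℝ →+* ℝ[X]).mapMatrix V).det
      = (charmatrix D).det * (((C : ℝ →+* ℝ[X]).mapMatrix U).det *
        ((C : ℝ →+* ℝ[X]).mapMatrix V).det) := by ring
    _ = (charmatrix D).det := by rw [h4, mul_one]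

lemma my_charpoly_diagonal {n : Type*} [Fintype n] [DecidableEq n] (d : n → ℝ) :
    (Matrix.diagonal d).charpoly = ∏ i, (X - C (d i)) := by
  have : charmatrix (Matrix.diagonal d) = Matrix.diagonal (fun i => X - C (d i)) := by
    ext i j
    by_cases hij : i = j
    · subst hij; simp
    · simp [charmatrix_apply_ne _ _ _ hij, Matrix.diagonal_apply_ne _ hij]
  rw [Matrix.charpoly, this, det_diagonal]

lemma my_roots_charpoly_diagonal {n : Type*} [Fintype n] [DecidableEq n] (d : n → ℝ) :
    (Matrix.diagonal d).charpoly.roots = Finset.univ.val.map d := by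
  rw [my_charpoly_diagonal, Finset.prod_eq_multiset_prod]
  have : Multiset.map (fun i => X - C (d i)) univ.val
      = Multiset.map (fun a => X - C a) (Multiset.map d univ.val) := by
    rw [Multiset.map_map]; rfl
  rw [this]
  exact roots_multiset_prod_X_sub_C _


-- telescoping over Ico
lemma my_tele (f : ℕ → ℝ) {a b : ℕ} (h : a ≤ b) :
    ∑ j ∈ Finset.Ico a b, (f j - f (j+1)) = f a - f b := by
  rw [Finset.sum_Ico_eq_sum_range]
  have h2 := Finset.sum_range_sub' (fun i => f (a + i)) (b - a)
  simp only [add_zero, ← Nat.add_assoc, Nat.add_sub_cancel' h] at h2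
  exact h2

noncomputable def myc (lam : ℕ → ℝ) (j : ℕ) : ℝ := lam j / ((j : ℝ) * ((j:ℝ)+1))
noncomputable def myT (n : ℕ) (lam : ℕ → ℝ) (m : ℕ) : ℝ :=
  -(m:ℝ) * ∑ j ∈ Finset.Ico m n, myc lam j
noncomputable def mys (n : ℕ) (lam : ℕ → ℝ) (m : ℕ) : ℝ := myT n lam m - myT n lam (m+1)

lemma myT_top (n : ℕ) (lam : ℕ → ℝ) : myT n lam n = 0 := by
  simp [myT]

-- sum of s over Ico m n is T m
lemma myT_sum (n : ℕ) (lam : ℕ → ℝ) {m : ℕ} (h : m ≤ n) :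
    ∑ j ∈ Finset.Ico m n, mys n lam j = myT n lam m := by
  rw [show (fun j => mys n lam j) = fun j => myT n lam j - myT n lam (j+1) from rfl]
  rw [my_tele _ h, myT_top, sub_zero]

-- the key eigenvalue identity
lemma my_key (n : ℕ) (lam : ℕ → ℝ) {m : ℕ} (h1 : 1 ≤ m) (h2 : m < n) :
    (m:ℝ) * myT n lam (m+1) - ((m:ℝ)+1) * myT n lam m = lam m := by
  have hm0 : (m:ℝ) ≠ 0 := by positivity
  have hm1 : (m:ℝ) + 1 ≠ 0 := by positivity
  rw [myT, myT, Finset.sum_eq_sum_Ico_succ_bot h2]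
  rw [myc]
  push_cast
  field_simp
  ring

lemma my_ss_neg {n : ℕ} (lam : ℕ → ℝ)
    (hlam : ∀ j, 1 ≤ lam j ∧ lam j ≤ 1 + 1/(n:ℝ)) {m : ℕ} (h1 : 1 ≤ m) (h2 : m < n) :
    mys n lam m < 0 := by
  have hn2 : (2:ℕ) ≤ n := by omega
  have hnR : (1:ℝ) ≤ (n:ℝ) := by exact_mod_cast Nat.one_le_of_lt hn2
  have hm0 : (0:ℝ) < (m:ℝ) := by exact_mod_cast h1
  have hmn : (m:ℝ) + 1 ≤ (n:ℝ) := by exact_mod_cast h2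
  -- mys = -m * c m + sum_{Ico (m+1) n} c
  have hsplit : mys n lam m = -(m:ℝ) * myc lam m + ∑ j ∈ Finset.Ico (m+1) n, myc lam j := by
    rw [mys, myT, myT, Finset.sum_eq_sum_Ico_succ_bot h2]
    push_cast
    ring
  rw [hsplit]
  -- bound the tail sum
  have htail : ∑ j ∈ Finset.Ico (m+1) n, myc lam j
      ≤ (1 + 1/(n:ℝ)) * (1/((m:ℝ)+1) - 1/(n:ℝ)) := by
    have hterm : ∀ j ∈ Finset.Ico (m+1) n, myc lam j
        ≤ (1 + 1/(n:ℝ)) * (1/(j:ℝ) - 1/((j:ℝ)+1)) := by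
      intro j hj
      rw [Finset.mem_Ico] at hj
      have hj1 : (1:ℝ) ≤ (j:ℝ) := by exact_mod_cast Nat.one_le_of_lt hj.1
      have hj0 : (0:ℝ) < (j:ℝ) := by linarith
      have e : 1/(j:ℝ) - 1/((j:ℝ)+1) = 1 / ((j:ℝ)*((j:ℝ)+1)) := by
        field_simp
        ring
      rw [e, myc, mul_one_div]
      apply div_le_div_of_nonneg_right ?_ (by positivity) |>.trans_eq rfl
      · exact (hlam j).2
    calc ∑ j ∈ Finset.Ico (m+1) n, myc lam j
        ≤ ∑ j ∈ Finset.Ico (m+1) n, (1 + 1/(n:ℝ)) * (1/(j:ℝ) - 1/((j:ℝ)+1)) :=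
          Finset.sum_le_sum hterm
      _ = (1 + 1/(n:ℝ)) * ∑ j ∈ Finset.Ico (m+1) n, ((fun k => 1/((k:ℕ):ℝ)) j - (fun k => 1/((k:ℕ):ℝ)) (j+1)) := by
          rw [Finset.mul_sum]
          apply Finset.sum_congr rfl
          intro j _
          push_cast
          ring
      _ = (1 + 1/(n:ℝ)) * (1/((m:ℝ)+1) - 1/(n:ℝ)) := by
          rw [my_tele (fun k => 1/((k:ℕ):ℝ)) (by omega : m + 1 ≤ n)]
          push_cast
          ring
  have hmc : 1/((m:ℝ)+1) ≤ (m:ℝ) * myc lam m := by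
    rw [myc]
    have := (hlam m).1
    rw [div_le_iff₀ (by positivity)]
    have e : (m:ℝ) * (lam m / ((m:ℝ)*((m:ℝ)+1))) = lam m / ((m:ℝ)+1) := by
      field_simp
    rw [e, div_mul_eq_mul_div, le_div_iff₀ (by positivity)]
    nlinarith
  have hfinal : (1 + 1/(n:ℝ)) * (1/((m:ℝ)+1) - 1/(n:ℝ)) < 1/((m:ℝ)+1) := by
    have hn0 : (0:ℝ) < (n:ℝ) := by linarith
    have hx0 : (0:ℝ) < (m:ℝ)+1 := by linarith
    rw [mul_sub, mul_one_div, mul_one_div]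
    have e1 : (1 + 1/(n:ℝ))/((m:ℝ)+1) = 1/((m:ℝ)+1) + 1/((n:ℝ)*((m:ℝ)+1)) := by
      field_simp
    have e2 : 1/((n:ℝ)*((m:ℝ)+1)) < (1 + 1/(n:ℝ))/(n:ℝ) := by
      rw [div_lt_div_iff₀ (by positivity) hn0]
      have hinv : (1/(n:ℝ)) * (n:ℝ) = 1 := by field_simp
      nlinarith [hinv, hm0, hnR]
    rw [e1]
    linarith
  linarith
noncomputable def mya (n : ℕ) (lam : ℕ → ℝ) (i j : ℕ) : ℝ :=
  if i = j then -((i:ℝ) * mys n lam i + ∑ k ∈ Finset.Ico (i+1) n, mys n lam k)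
  else mys n lam (max i j)

noncomputable def myu (j m : ℕ) : ℝ :=
  if m = 0 then 1 else if j < m then 1 else if j = m then -(m:ℝ) else 0

noncomputable def myd (lam : ℕ → ℝ) (m : ℕ) : ℝ := if m = 0 then 0 else lam m


-- variable section
section
variable (n : ℕ) (lam : ℕ → ℝ)
lemma my_row_sum {i : ℕ} (hi : i < n) : ∑ j ∈ Finset.range n, mya n lam i j = 0 := by
  have hsplit : ∑ j ∈ Finset.range n, mya n lam i j =
      ∑ j ∈ Finset.range i, mya n lam i j + ∑ j ∈ Finset.Ico i n, mya n lam i j := by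
    rw [Finset.range_eq_Ico, Finset.range_eq_Ico, Finset.sum_Ico_consecutive _ (Nat.zero_le i) (le_of_lt hi),
      ← Finset.range_eq_Ico]
  rw [hsplit, Finset.sum_eq_sum_Ico_succ_bot hi]
  have e1 : ∑ j ∈ Finset.range i, mya n lam i j = (i:ℝ) * mys n lam i := by
    rw [Finset.sum_congr rfl (fun j hj => ?_), Finset.sum_const, Finset.card_range,
      nsmul_eq_mul]
    rw [Finset.mem_range] at hj
    rw [mya, if_neg (by omega), max_eq_left (le_of_lt hj)]
  have e2 : ∑ j ∈ Finset.Ico (i+1) n, mya n lam i j = ∑ k ∈ Finset.Ico (i+1) n, mys n lam k := by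
    apply Finset.sum_congr rfl
    intro j hj
    rw [Finset.mem_Ico] at hj
    rw [mya, if_neg (by omega), max_eq_right (by omega)]
  rw [e1, e2, mya, if_pos rfl]
  ring

lemma my_eig {i m : ℕ} (hi : i < n) (hm : m < n) :
    ∑ j ∈ Finset.range n, mya n lam i j * myu j m = myd lam m * myu i m := by
  by_cases hm0 : m = 0
  · subst hm0
    have h1 : ∀ j, myu j 0 = 1 := fun j => by rw [myu, if_pos rfl]
    have h2 : myd lam 0 = 0 := by rw [myd, if_pos rfl]
    rw [h2, zero_mul, show (∑ j ∈ Finset.range n, mya n lam i j * myu j 0)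
      = ∑ j ∈ Finset.range n, mya n lam i j from
      Finset.sum_congr rfl fun j _ => by rw [h1, mul_one]]
    exact my_row_sum n lam hi
  -- m ≥ 1
  have hu : ∀ j, myu j m = if j < m then 1 else if j = m then -(m:ℝ) else 0 := by
    intro j; rw [myu, if_neg hm0]
  have hsplit : ∑ j ∈ Finset.range n, mya n lam i j * myu j m =
      ∑ j ∈ Finset.range m, mya n lam i j + (-(m:ℝ)) * mya n lam i m := by
    rw [Finset.range_eq_Ico, ← Finset.sum_Ico_consecutive _ (Nat.zero_le m) (le_of_lt hm),
      ← Finset.range_eq_Ico]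
    congr 1
    · apply Finset.sum_congr rfl
      intro j hj
      rw [Finset.mem_range] at hj
      rw [hu, if_pos hj, mul_one]
    · rw [Finset.sum_eq_single_of_mem m (Finset.mem_Ico.mpr ⟨le_refl m, hm⟩)]
      · rw [hu, if_neg (by omega), if_pos rfl]; ring
      · intro j hj hjm
        rw [Finset.mem_Ico] at hj
        rw [hu, if_neg (by omega), if_neg hjm, mul_zero]
  rw [hsplit]
  rcases lt_trichotomy i m with hlt | heq | hgt
  · -- i < m : eigenvalue lam m, eigenvector entry 1
    have e1 : ∑ j ∈ Finset.range m, mya n lam i j =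
        (i:ℝ) * mys n lam i + mya n lam i i + ∑ j ∈ Finset.Ico (i+1) m, mys n lam j := by
      rw [Finset.range_eq_Ico, ← Finset.sum_Ico_consecutive _ (Nat.zero_le i) (le_of_lt hlt),
        ← Finset.range_eq_Ico, Finset.sum_eq_sum_Ico_succ_bot hlt]
      have e11 : ∑ j ∈ Finset.range i, mya n lam i j = (i:ℝ) * mys n lam i := by
        rw [Finset.sum_congr rfl (fun j hj => ?_), Finset.sum_const, Finset.card_range,
          nsmul_eq_mul]
        rw [Finset.mem_range] at hj
        rw [mya, if_neg (by omega), max_eq_left (le_of_lt hj)]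
      have e12 : ∑ j ∈ Finset.Ico (i+1) m, mya n lam i j = ∑ j ∈ Finset.Ico (i+1) m, mys n lam j := by
        apply Finset.sum_congr rfl
        intro j hj
        rw [Finset.mem_Ico] at hj
        rw [mya, if_neg (by omega), max_eq_right (by omega)]
      rw [e11, e12]
      ring
    have e2 : mya n lam i i = -((i:ℝ) * mys n lam i + ∑ k ∈ Finset.Ico (i+1) n, mys n lam k) := by
      rw [mya, if_pos rfl]
    have e3 : ∑ k ∈ Finset.Ico (i+1) n, mys n lam k =
        ∑ j ∈ Finset.Ico (i+1) m, mys n lam j + ∑ j ∈ Finset.Ico m n, mys n lam j := by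
      rw [Finset.sum_Ico_consecutive _ (by omega) (le_of_lt hm)]
    have e4 : mya n lam i m = mys n lam m := by
      rw [mya, if_neg (by omega), max_eq_right (by omega)]
    have e5 : myu i m = 1 := by rw [hu, if_pos hlt]
    have e6 : myd lam m = lam m := by rw [myd, if_neg hm0]
    rw [e1, e2, e3, e4, e5, e6, myT_sum n lam (le_of_lt hm), mul_one]
    have hk := my_key n lam (by omega : 1 ≤ m) hm
    simp only [mys]
    linarith [hk]
  · -- i = m
    subst heq
    have e1 : ∑ j ∈ Finset.range i, mya n lam i j = (i:ℝ) * mys n lam i := by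
      rw [Finset.sum_congr rfl (fun j hj => ?_), Finset.sum_const, Finset.card_range,
        nsmul_eq_mul]
      rw [Finset.mem_range] at hj
      rw [mya, if_neg (by omega), max_eq_left (le_of_lt hj)]
    have e2 : mya n lam i i = -((i:ℝ) * mys n lam i + ∑ k ∈ Finset.Ico (i+1) n, mys n lam k) := by
      rw [mya, if_pos rfl]
    have e5 : myu i i = -(i:ℝ) := by rw [hu, if_neg (by omega), if_pos rfl]
    have e6 : myd lam i = lam i := by rw [myd, if_neg hm0]
    rw [e1, e2, e5, e6, myT_sum n lam (by omega : i + 1 ≤ n)]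
    have hk := my_key n lam (by omega : 1 ≤ i) hi
    simp only [mys]
    nlinarith [hk]
  · -- i > m : entry 0
    have e1 : ∑ j ∈ Finset.range m, mya n lam i j = (m:ℝ) * mys n lam i := by
      rw [Finset.sum_congr rfl (fun j hj => ?_), Finset.sum_const, Finset.card_range,
        nsmul_eq_mul]
      rw [Finset.mem_range] at hj
      rw [mya, if_neg (by omega), max_eq_left (by omega)]
    have e4 : mya n lam i m = mys n lam i := by
      rw [mya, if_neg (by omega), max_eq_left (by omega)]
    have e5 : myu i m = 0 := by rw [hu, if_neg (by omega), if_neg (by omega)]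
    rw [e1, e4, e5, mul_zero]
    ring

lemma my_orth_aux {m l : ℕ} (hl : l < n) (hml : m < l) :
    ∑ j ∈ Finset.range n, myu j m * myu j l = 0 := by
  have hl0 : l ≠ 0 := by omega
  have hul : ∀ j, myu j l = if j < l then 1 else if j = l then -(l:ℝ) else 0 := by
    intro j; rw [myu, if_neg hl0]
  by_cases hm0 : m = 0
  · subst hm0
    have : ∀ j, myu j 0 * myu j l = myu j l := by
      intro j; rw [myu, if_pos rfl, one_mul]
    rw [Finset.sum_congr rfl (fun j _ => this j)]
    -- sum of column l is 0
    rw [Finset.range_eq_Ico, ← Finset.sum_Ico_consecutive _ (Nat.zero_le l) (le_of_lt hl),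
      ← Finset.range_eq_Ico]
    have e1 : ∑ j ∈ Finset.range l, myu j l = (l:ℝ) := by
      rw [Finset.sum_congr rfl (fun j hj => ?_), Finset.sum_const, Finset.card_range,
        nsmul_eq_mul, mul_one]
      rw [Finset.mem_range] at hj
      rw [hul, if_pos hj]
    have e2 : ∑ j ∈ Finset.Ico l n, myu j l = -(l:ℝ) := by
      rw [Finset.sum_eq_single_of_mem l (Finset.mem_Ico.mpr ⟨le_refl l, hl⟩)]
      · rw [hul, if_neg (by omega), if_pos rfl]
      · intro j hj hjl
        rw [Finset.mem_Ico] at hj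
        rw [hul, if_neg (by omega), if_neg hjl]
    rw [e1, e2]; ring
  · have hum : ∀ j, myu j m = if j < m then 1 else if j = m then -(m:ℝ) else 0 := by
      intro j; rw [myu, if_neg hm0]
    rw [Finset.range_eq_Ico, ← Finset.sum_Ico_consecutive _ (Nat.zero_le (m+1)) (by omega : m+1 ≤ n),
      ← Finset.range_eq_Ico]
    have e2 : ∑ j ∈ Finset.Ico (m+1) n, myu j m * myu j l = 0 := by
      apply Finset.sum_eq_zero
      intro j hj
      rw [Finset.mem_Ico] at hj
      rw [hum, if_neg (by omega), if_neg (by omega), zero_mul]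
    have e1 : ∑ j ∈ Finset.range (m+1), myu j m * myu j l =
        ∑ j ∈ Finset.range (m+1), myu j m := by
      apply Finset.sum_congr rfl
      intro j hj
      rw [Finset.mem_range] at hj
      rw [hul, if_pos (by omega), mul_one]
    have e3 : ∑ j ∈ Finset.range (m+1), myu j m = 0 := by
      rw [Finset.sum_range_succ]
      have e31 : ∑ j ∈ Finset.range m, myu j m = (m:ℝ) := by
        rw [Finset.sum_congr rfl (fun j hj => ?_), Finset.sum_const, Finset.card_range,
          nsmul_eq_mul, mul_one]
        rw [Finset.mem_range] at hj
        rw [hum, if_pos hj]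
      rw [e31, hum, if_neg (by omega), if_pos rfl]
      ring
    rw [e1, e3, e2]
    ring

lemma my_orth_diag {m : ℕ} (hm : m < n) (hn : 1 ≤ n) :
    ∑ j ∈ Finset.range n, myu j m * myu j m ≠ 0 := by
  by_cases hm0 : m = 0
  · subst hm0
    have : ∀ j, myu j 0 * myu j 0 = 1 := by intro j; rw [myu, if_pos rfl, one_mul]
    rw [Finset.sum_congr rfl (fun j _ => this j), Finset.sum_const, Finset.card_range,
      nsmul_eq_mul, mul_one]
    have : n ≠ 0 := by omega
    exact_mod_cast this
  · have hum : ∀ j, myu j m = if j < m then 1 else if j = m then -(m:ℝ) else 0 := by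
      intro j; rw [myu, if_neg hm0]
    rw [Finset.range_eq_Ico, ← Finset.sum_Ico_consecutive _ (Nat.zero_le (m+1)) (by omega : m+1 ≤ n),
      ← Finset.range_eq_Ico]
    have e2 : ∑ j ∈ Finset.Ico (m+1) n, myu j m * myu j m = 0 := by
      apply Finset.sum_eq_zero
      intro j hj
      rw [Finset.mem_Ico] at hj
      rw [hum, if_neg (by omega), if_neg (by omega), zero_mul]
    have e1 : ∑ j ∈ Finset.range (m+1), myu j m * myu j m = (m:ℝ) + (m:ℝ)^2 := by
      rw [Finset.sum_range_succ]
      have e31 : ∑ j ∈ Finset.range m, myu j m * myu j m = (m:ℝ) := by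
        rw [Finset.sum_congr rfl (fun j hj => ?_), Finset.sum_const, Finset.card_range,
          nsmul_eq_mul, mul_one]
        rw [Finset.mem_range] at hj
        rw [hum, if_pos hj, mul_one]
      rw [e31, hum, if_neg (by omega), if_pos rfl]
      ring
    rw [e1, e2, add_zero]
    have : (0:ℝ) < (m:ℝ) := by exact_mod_cast Nat.pos_of_ne_zero hm0
    positivity
end


/-- block index of position `m` for a partition given by list `M` of block sizes -/
def myblk : List ℕ → ℕ → ℕ
  | [], _ => 0
  | (k :: rest), m => if m < k then 0 else myblk rest (m - k) + 1

lemma myblk_lt : ∀ (M : List ℕ) (m : ℕ), m < M.sum → myblk M m < M.length := by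
  intro M
  induction M with
  | nil => intro m hm; simp at hm
  | cons k rest ih =>
    intro m hm
    rw [myblk]
    by_cases h : m < k
    · rw [if_pos h]; simp
    · rw [if_neg h]
      have : m - k < rest.sum := by
        rw [List.sum_cons] at hm; omega
      have := ih _ this
      simpa using Nat.succ_lt_succ this

lemma my_multiset_blocks : ∀ (M : List ℕ) (g : ℕ → ℝ),
    (Multiset.range M.sum).map (fun m => g (myblk M m)) =
      ∑ i : Fin M.length, Multiset.replicate (M.get i) (g i) := by
  intro M
  induction M with
  | nil => intro g; simp
  | cons k rest ih =>
    intro g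
    have hr : Multiset.range (k :: rest).sum =
        Multiset.range k + (Multiset.range rest.sum).map (fun x => k + x) := by
      rw [List.sum_cons]
      rw [show Multiset.range (k + rest.sum) = ↑(List.range (k + rest.sum)) from rfl,
        List.range_add]
      simp [Multiset.range]
    rw [hr, Multiset.map_add, Multiset.map_map]
    have e1 : (Multiset.range k).map (fun m => g (myblk (k :: rest) m)) =
        Multiset.replicate k (g 0) := by
      rw [Multiset.map_congr rfl (fun m hm => ?_)]
      · rw [Multiset.map_const', Multiset.card_range]
      · rw [Multiset.mem_range] at hm
        rw [myblk, if_pos hm]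
    have e2 : (Multiset.range rest.sum).map ((fun m => g (myblk (k :: rest) m)) ∘ (fun x => k + x)) =
        (Multiset.range rest.sum).map (fun m => (g ∘ Nat.succ) (myblk rest m)) := by
      apply Multiset.map_congr rfl
      intro m _
      simp only [Function.comp_apply]
      rw [myblk, if_neg (by omega), Nat.add_sub_cancel_left]
    rw [e1, e2, ih (g ∘ Nat.succ)]
    show _ = ∑ i : Fin (rest.length + 1), Multiset.replicate ((k :: rest).get i) (g i)
    rw [Fin.sum_univ_succ]
    rfl

/-- `A` is a generalized Laplacian matrix for the graph `G`. -/
def IsGenLap {n : ℕ} (G : SimpleGraph (Fin n)) (A : Matrix (Fin n) (Fin n) ℝ) : Prop :=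
  A.IsSymm ∧
  (∀ i j, G.Adj i j → A i j < 0) ∧
  (∀ i j, i ≠ j → ¬ G.Adj i j → A i j = 0) ∧
  (∀ i, ∑ j, A i j = 0)

/-- The list `L` of positive integers is the ordered multiplicity list of some generalized
Laplacian matrix of `G`:  there are strictly increasing reals `μ 0 < μ 1 < ⋯` such that the
multiset of eigenvalues of the matrix consists of `μ i` with multiplicity `L.get i`. -/
def RealizesOML {n : ℕ} (G : SimpleGraph (Fin n)) (L : List ℕ) : Prop :=
  (∀ m ∈ L, 0 < m) ∧
  ∃ A : Matrix (Fin n) (Fin n) ℝ, IsGenLap G A ∧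
    ∃ μ : Fin L.length → ℝ, StrictMono μ ∧
      A.charpoly.roots = ∑ i : Fin L.length, Multiset.replicate (L.get i) (μ i)

lemma myblk_le : ∀ (M : List ℕ) (m : ℕ), myblk M m ≤ M.length := by
  intro M
  induction M with
  | nil => intro m; simp [myblk]
  | cons k rest ih =>
    intro m
    rw [myblk]
    by_cases h : m < k
    · rw [if_pos h]; simp
    · rw [if_neg h]
      simpa using Nat.succ_le_succ (ih (m - k))

lemma reverse_dir (n : ℕ) (hn : 2 ≤ n) (L : List ℕ)
    (hpos : ∀ m ∈ L, 0 < m) (hhead : L.head? = some 1) (hsum : L.sum = n) :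
    RealizesOML (⊤ : SimpleGraph (Fin n)) L := by
  -- L = 1 :: M
  obtain ⟨a, M, rfl⟩ : ∃ a M, L = a :: M := by
    cases L with
    | nil => simp at hhead
    | cons a M => exact ⟨a, M, rfl⟩
  have ha : a = 1 := by simpa using hhead
  subst ha
  have hMsum : M.sum + 1 = n := by
    rw [List.sum_cons] at hsum; omega
  set q : ℕ := M.length with hq
  -- the distinct positive eigenvalues
  set g : ℕ → ℝ := fun t => 1 + ((t:ℝ)+1)/((n:ℝ) * ((q:ℝ)+1)) with hg
  have hnR : (2:ℝ) ≤ (n:ℝ) := by exact_mod_cast hn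
  have hden : (0:ℝ) < (n:ℝ) * ((q:ℝ)+1) := by positivity
  set lam : ℕ → ℝ := fun j => g (myblk M (j - 1)) with hlam_def
  have hlam : ∀ j, 1 ≤ lam j ∧ lam j ≤ 1 + 1/(n:ℝ) := by
    intro j
    constructor
    · have : (0:ℝ) ≤ ((myblk M (j-1) : ℝ)+1)/((n:ℝ) * ((q:ℝ)+1)) := by positivity
      simp only [hlam_def, hg]; linarith
    · have hb : (myblk M (j-1) : ℝ) + 1 ≤ (q:ℝ) + 1 := by
        have := myblk_le M (j-1); exact_mod_cast Nat.succ_le_succ this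
      simp only [hlam_def, hg]
      have h1 : ((myblk M (j-1) : ℝ)+1)/((n:ℝ) * ((q:ℝ)+1)) ≤ ((q:ℝ)+1)/((n:ℝ) * ((q:ℝ)+1)) := by
        exact div_le_div_of_nonneg_right hb hden.le
      have h2 : ((q:ℝ)+1)/((n:ℝ) * ((q:ℝ)+1)) = 1/(n:ℝ) := by
        field_simp
      linarith
  -- matrices
  set A : Matrix (Fin n) (Fin n) ℝ := Matrix.of (fun i j : Fin n => mya n lam i j) with hA
  set U : Matrix (Fin n) (Fin n) ℝ := Matrix.of (fun i m : Fin n => myu i m) with hU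
  set Dg : Matrix (Fin n) (Fin n) ℝ := Matrix.diagonal (fun m : Fin n => myd lam m) with hDg
  -- IsGenLap
  have hgen : IsGenLap (⊤ : SimpleGraph (Fin n)) A := by
    refine ⟨?_, ?_, ?_, ?_⟩
    · ext i j
      show A j i = A i j
      simp only [hA, Matrix.of_apply, mya]
      by_cases hij : (i:ℕ) = (j:ℕ)
      · rw [if_pos hij.symm, if_pos hij, hij]
      · rw [if_neg (Ne.symm hij), if_neg hij, max_comm]
    · intro i j hadj
      rw [SimpleGraph.top_adj] at hadj
      have hij : (i:ℕ) ≠ (j:ℕ) := fun h => hadj (Fin.ext h)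
      show mya n lam i j < 0
      rw [mya, if_neg hij]
      exact my_ss_neg lam hlam (by omega) (by have := i.isLt; have := j.isLt; omega)
    · intro i j hne hadj
      exact absurd ((SimpleGraph.top_adj i j).mpr hne) hadj
    · intro i
      have := my_row_sum n lam i.isLt
      rw [← Fin.sum_univ_eq_sum_range (fun j => mya n lam i j) n] at this
      exact this
  -- A * U = U * Dg
  have hAU : A * U = U * Dg := by
    ext i m
    rw [Matrix.mul_apply, hDg, Matrix.mul_diagonal]
    have heig := my_eig n lam i.isLt m.isLt
    rw [← Fin.sum_univ_eq_sum_range (fun j => mya n lam i j * myu j m) n] at heig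
    have hL : ∑ j : Fin n, A i j * U j m = ∑ j : Fin n, mya n lam (i:ℕ) (j:ℕ) * myu (j:ℕ) (m:ℕ) :=
      Finset.sum_congr rfl fun j _ => rfl
    rw [hL, heig]
    show myd lam (m:ℕ) * myu (i:ℕ) (m:ℕ) = myu (i:ℕ) (m:ℕ) * myd lam (m:ℕ)
    ring
  -- U is invertible
  have hUtU : Uᵀ * U = Matrix.diagonal (fun m : Fin n => ∑ j ∈ Finset.range n, myu j m * myu j m) := by
    ext m l
    rw [Matrix.mul_apply]
    by_cases hml : m = l
    · subst hml
      rw [Matrix.diagonal_apply_eq]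
      rw [← Fin.sum_univ_eq_sum_range (fun j => myu j m * myu j m) n]
      rfl
    · rw [Matrix.diagonal_apply_ne _ hml]
      have hvml : (m:ℕ) ≠ (l:ℕ) := fun h => hml (Fin.ext h)
      rcases Nat.lt_or_ge (m:ℕ) (l:ℕ) with h | h
      · have := my_orth_aux n l.isLt h
        rw [← Fin.sum_univ_eq_sum_range (fun j => myu j m * myu j l) n] at this
        exact this
      · have hlm : (l:ℕ) < (m:ℕ) := by omega
        have := my_orth_aux n m.isLt hlm
        rw [← Fin.sum_univ_eq_sum_range (fun j => myu j l * myu j m) n] at this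
        rw [show (∑ j : Fin n, Uᵀ m j * U j l) = ∑ j : Fin n, myu (j:ℕ) l * myu (j:ℕ) m from
          Finset.sum_congr rfl fun j _ => by show myu j m * myu j l = _; ring]
        exact this
  have hdetU : IsUnit U.det := by
    rw [isUnit_iff_ne_zero]
    intro h0
    have : (Uᵀ * U).det = 0 := by rw [Matrix.det_mul, Matrix.det_transpose, h0, mul_zero]
    rw [hUtU, Matrix.det_diagonal] at this
    have := Finset.prod_eq_zero_iff.mp this
    obtain ⟨m, _, hm⟩ := this
    exact my_orth_diag n m.isLt (by omega) hm
  -- A = U * Dg * U⁻¹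
  have hAconj : A = U * Dg * U⁻¹ := by
    calc A = A * (U * U⁻¹) := by rw [Matrix.mul_nonsing_inv U hdetU, mul_one]
    _ = (A * U) * U⁻¹ := by rw [mul_assoc]
    _ = U * Dg * U⁻¹ := by rw [hAU]
  have hchar : A.charpoly.roots = Finset.univ.val.map (fun m : Fin n => myd lam m) := by
    rw [hAconj, my_charpoly_mul_mul U U⁻¹ Dg (Matrix.mul_nonsing_inv U hdetU),
      hDg, my_roots_charpoly_diagonal]
  -- eigenvalue function on Fin L.length
  refine ⟨hpos, A, hgen, fun i => if (i:ℕ) = 0 then 0 else g ((i:ℕ)-1), ?_, ?_⟩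
  · -- strict mono
    intro i j hij
    have hij' : (i:ℕ) < (j:ℕ) := hij
    show (if (i:ℕ) = 0 then (0:ℝ) else g ((i:ℕ)-1)) < (if (j:ℕ) = 0 then (0:ℝ) else g ((j:ℕ)-1))
    by_cases hi0 : (i:ℕ) = 0
    · rw [if_pos hi0, if_neg (by omega)]
      have : (0:ℝ) < ((((j:ℕ)-1 : ℕ):ℝ)+1)/((n:ℝ) * ((q:ℝ)+1)) := by positivity
      simp only [hg]; linarith
    · rw [if_neg hi0, if_neg (by omega)]
      simp only [hg]
      have hcast : (((i:ℕ)-1 : ℕ):ℝ) + 1 < (((j:ℕ)-1 : ℕ):ℝ) + 1 := by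
        have : (i:ℕ) - 1 < (j:ℕ) - 1 := by omega
        exact_mod_cast Nat.succ_lt_succ this
      have h3 : ((((i:ℕ)-1 : ℕ):ℝ)+1)/((n:ℝ) * ((q:ℝ)+1))
          < ((((j:ℕ)-1 : ℕ):ℝ)+1)/((n:ℝ) * ((q:ℝ)+1)) := by gcongr
      linarith
  · -- roots multiset
    rw [hchar]
    -- left side to Multiset.range
    have hval : (Finset.univ.val.map (fun m : Fin n => myd lam m))
        = (Multiset.range n).map (myd lam) := by
      have : Finset.univ.val.map (fun m : Fin n => myd lam (m:ℕ))
          = (Finset.univ.val.map (fun m : Fin n => (m:ℕ))).map (myd lam) := by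
        rw [Multiset.map_map]; rfl
      rw [this]
      congr 1
      calc Multiset.map (fun m : Fin n => (m:ℕ)) Finset.univ.val
          = (Finset.map Fin.valEmbedding Finset.univ).val := by rw [Finset.map_val]; rfl
        _ = (Finset.range n).val := by rw [Fin.map_valEmbedding_univ, Nat.Iio_eq_range]
        _ = Multiset.range n := rfl
    rw [hval]
    have hsplit : (Multiset.range n) = Multiset.range 1 + (Multiset.range M.sum).map (fun x => 1 + x) := by
      rw [show n = 1 + M.sum by omega]
      rw [show Multiset.range (1 + M.sum) = ↑(List.range (1 + M.sum)) from rfl, List.range_add]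
      simp [Multiset.range]
    rw [hsplit, Multiset.map_add, Multiset.map_map]
    have e0 : (Multiset.range 1).map (myd lam) = {(0:ℝ)} := by
      rw [show Multiset.range 1 = {0} from rfl]
      simp [myd]
    have e1 : (Multiset.range M.sum).map ((myd lam) ∘ (fun x => 1 + x))
        = (Multiset.range M.sum).map (fun m => g (myblk M m)) := by
      apply Multiset.map_congr rfl
      intro m _
      simp only [Function.comp_apply, myd, hlam_def]
      rw [if_neg (by omega), show 1 + m - 1 = m from by omega]
    rw [e0, e1, my_multiset_blocks M g]
    -- right side
    show _ = ∑ i : Fin (M.length + 1), Multiset.replicate (((1:ℕ) :: M).get i)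
      (if (i:ℕ) = 0 then (0:ℝ) else g ((i:ℕ)-1))
    rw [Fin.sum_univ_succ]
    congr 1

lemma my_list_sum (L : List ℕ) : ∑ i : Fin L.length, L.get i = L.sum := by
  induction L with
  | nil => simp
  | cons a t ih =>
    rw [List.sum_cons, ← ih]
    exact Fin.sum_univ_succ (f := fun i : Fin (t.length+1) => (a::t).get i)

-- quadratic form identity
lemma my_quad {n : ℕ} (A : Matrix (Fin n) (Fin n) ℝ) (hsym : ∀ i j, A j i = A i j)
    (hrow : ∀ i, ∑ j, A i j = 0) (x : Fin n → ℝ) :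
    x ⬝ᵥ (A *ᵥ x) = ∑ i, ∑ j, (-(A i j)) * (x i - x j)^2 / 2 := by
  have hterm : ∀ i j, (-(A i j)) * (x i - x j)^2 / 2
      = x i * (A i j * x j) - A i j * x i^2 / 2 - A i j * x j^2 / 2 := by
    intro i j; ring
  have hrhs : ∑ i, ∑ j, (-(A i j)) * (x i - x j)^2 / 2
      = ∑ i, ∑ j, x i * (A i j * x j)
        - ∑ i, ∑ j, A i j * x i^2 / 2 - ∑ i, ∑ j, A i j * x j^2 / 2 := by
    rw [← Finset.sum_sub_distrib, ← Finset.sum_sub_distrib]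
    apply Finset.sum_congr rfl
    intro i _
    rw [← Finset.sum_sub_distrib, ← Finset.sum_sub_distrib]
    exact Finset.sum_congr rfl fun j _ => hterm i j
  have h1 : ∑ i : Fin n, ∑ j : Fin n, A i j * x i^2 / 2 = 0 := by
    apply Finset.sum_eq_zero
    intro i _
    rw [show (fun j => A i j * x i^2/2) = fun j => A i j * (x i^2/2) from funext fun j => by ring]
    rw [← Finset.sum_mul, hrow i, zero_mul]
  have h2 : ∑ i : Fin n, ∑ j : Fin n, A i j * x j^2 / 2 = 0 := by
    rw [Finset.sum_comm]
    apply Finset.sum_eq_zero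
    intro j _
    rw [show (fun i => A i j * x j^2/2) = fun i => A i j * (x j^2/2) from funext fun i => by ring]
    rw [← Finset.sum_mul]
    rw [show (∑ i, A i j) = ∑ i, A j i from Finset.sum_congr rfl fun i _ => hsym j i]
    rw [hrow j, zero_mul]
  rw [hrhs, h1, h2, sub_zero, sub_zero]
  rw [dotProduct]
  apply Finset.sum_congr rfl
  intro i _
  rw [mulVec, dotProduct, Finset.mul_sum]

lemma forward_dir (n : ℕ) (hn : 2 ≤ n) (L : List ℕ)
    (h : RealizesOML (⊤ : SimpleGraph (Fin n)) L) :
    (∀ m ∈ L, 0 < m) ∧ L.head? = some 1 ∧ L.sum = n := by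
  obtain ⟨hpos, A, hgen, μ, hmono, hroots⟩ := h
  obtain ⟨hsymm, hneg, -, hrow⟩ := hgen
  have hsym : ∀ i j, A j i = A i j := fun i j => by
    conv_rhs => rw [← hsymm]
    rfl
  have hadj : ∀ i j : Fin n, i ≠ j → A i j < 0 := fun i j hij =>
    hneg i j ((SimpleGraph.top_adj i j).mpr hij)
  -- Hermitian
  have hherm : A.IsHermitian := by
    rw [Matrix.IsHermitian, Matrix.conjTranspose_eq_transpose_of_trivial]
    exact hsymm
  -- roots of charpoly = eigenvalues
  set ev := hherm.eigenvalues with hev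
  have hchar : A.charpoly.roots = Finset.univ.val.map ev := by
    have hst := hherm.spectral_theorem
    have hid : (RCLike.ofReal ∘ ev : Fin n → ℝ) = ev := by
      funext i; simp [RCLike.ofReal]
    rw [hid, Unitary.conjStarAlgAut_apply] at hst
    rw [hst, my_charpoly_mul_mul _ _ _ (Matrix.mem_unitaryGroup_iff.mp
      (Matrix.IsHermitian.eigenvectorUnitary hherm).2), my_roots_charpoly_diagonal]
  -- positive semidefinite
  have hPSD : A.PosSemidef := by
    refine .of_dotProduct_mulVec_nonneg hherm fun x => ?_
    rw [show star x = x from star_trivial x]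
    rw [my_quad A hsym hrow x]
    apply Finset.sum_nonneg
    intro i _
    apply Finset.sum_nonneg
    intro j _
    by_cases hij : i = j
    · subst hij; simp
    · have h1 := hadj i j hij
      have h2 : (0:ℝ) ≤ (x i - x j)^2 := sq_nonneg _
      have h3 : (0:ℝ) ≤ -(A i j) := by linarith
      exact div_nonneg (mul_nonneg h3 h2) (by norm_num)
  have hev_nonneg : ∀ i, 0 ≤ ev i := hPSD.eigenvalues_nonneg
  -- the all-ones vector is in the kernel
  have hones : A *ᵥ (fun _ => (1:ℝ)) = 0 := by
    funext i
    show ∑ j, A i j * 1 = 0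
    simp only [mul_one]
    exact hrow i
  -- kernel is the span of ones
  have hker : LinearMap.ker A.mulVecLin = Submodule.span ℝ {(fun _ => (1:ℝ))} := by
    apply le_antisymm
    · intro x hx
      rw [LinearMap.mem_ker, Matrix.mulVecLin_apply] at hx
      have hq : x ⬝ᵥ (A *ᵥ x) = 0 := by rw [hx, dotProduct_zero]
      rw [my_quad A hsym hrow x] at hq
      have hzero : ∀ i ∈ Finset.univ, ∀ j ∈ Finset.univ,
          (-(A i j)) * (x i - x j)^2 / 2 = 0 := by
        have houter : ∀ i ∈ Finset.univ, ∑ j, (-(A i j)) * (x i - x j)^2 / 2 = 0 := by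
          rw [← Finset.sum_eq_zero_iff_of_nonneg]
          · exact hq
          · intro i _
            apply Finset.sum_nonneg
            intro j _
            by_cases hij : i = j
            · subst hij; simp
            · have h1 := hadj i j hij
              have h2 : (0:ℝ) ≤ (x i - x j)^2 := sq_nonneg _
              have h3 : (0:ℝ) ≤ -(A i j) := by linarith
              exact div_nonneg (mul_nonneg h3 h2) (by norm_num)
        intro i hi
        rw [← Finset.sum_eq_zero_iff_of_nonneg]
        · exact houter i hi
        · intro j _
          by_cases hij : i = j
          · subst hij; simp
          · have h1 := hadj i j hij
            have h2 : (0:ℝ) ≤ (x i - x j)^2 := sq_nonneg _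
            have h3 : (0:ℝ) ≤ -(A i j) := by linarith
            exact div_nonneg (mul_nonneg h3 h2) (by norm_num)
      have hconst : ∀ i j : Fin n, x i = x j := by
        intro i j
        by_cases hij : i = j
        · rw [hij]
        · have := hzero i (Finset.mem_univ i) j (Finset.mem_univ j)
          have hA := hadj i j hij
          have : (x i - x j)^2 = 0 := by
            by_contra hne
            have h2 : (0:ℝ) < (x i - x j)^2 := lt_of_le_of_ne (sq_nonneg _) (Ne.symm hne)
            nlinarith
          have := pow_eq_zero_iff (n := 2) (by norm_num) |>.mp this
          linarith [this]
      have hzero' : 0 < n := by omega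
      have : x = x ⟨0, hzero'⟩ • (fun _ => (1:ℝ)) := by
        funext i
        simp [hconst i ⟨0, hzero'⟩]
      rw [this]
      exact Submodule.smul_mem _ _ (Submodule.mem_span_singleton_self _)
    · rw [Submodule.span_le]
      intro v hv
      rw [Set.mem_singleton_iff] at hv
      subst hv
      rw [SetLike.mem_coe, LinearMap.mem_ker, Matrix.mulVecLin_apply]
      exact hones
  -- rank is n - 1
  have hones_ne : (fun _ => (1:ℝ)) ≠ (0 : Fin n → ℝ) := by
    intro h
    have := congrFun h ⟨0, by omega⟩
    simp at this
  have hkerdim : Module.finrank ℝ (LinearMap.ker A.mulVecLin) = 1 := by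
    rw [hker]
    exact finrank_span_singleton hones_ne
  have hrank : A.rank + 1 = n := by
    have := LinearMap.finrank_range_add_finrank_ker A.mulVecLin
    rw [hkerdim, Module.finrank_fintype_fun_eq_card, Fintype.card_fin] at this
    exact this
  -- number of zero eigenvalues is 1
  have hcount : Multiset.count 0 A.charpoly.roots = 1 := by
    rw [hchar, Multiset.count_map]
    have hfilt : Multiset.card (Multiset.filter (fun a => 0 = ev a) Finset.univ.val)
        = (Finset.filter (fun a => 0 = ev a) Finset.univ).card := rfl
    rw [hfilt]
    have hc1 : (Finset.filter (fun a => ev a ≠ 0) Finset.univ).card = A.rank := by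
      rw [hherm.rank_eq_card_non_zero_eigs, Fintype.card_subtype]
    have hc2 : (Finset.filter (fun a => 0 = ev a) Finset.univ).card
        = (Finset.filter (fun a => ¬ (ev a ≠ 0)) Finset.univ).card := by
      congr 1
      apply Finset.filter_congr
      intro i _
      simp [eq_comm]
    have hc3 := Finset.card_filter_add_card_filter_not
      (s := (Finset.univ : Finset (Fin n))) (fun a => ev a ≠ 0)
    rw [Finset.card_univ, Fintype.card_fin] at hc3
    omega
  -- L.sum = n
  have hcard : L.sum = n := by
    have := congrArg Multiset.card hroots
    rw [hchar] at this
    rw [Multiset.card_map] at this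
    have hl : (Multiset.card (Finset.univ : Finset (Fin n)).val) = n := by
      rw [← Finset.card_def, Finset.card_univ, Fintype.card_fin]
    rw [hl] at this
    let f : Multiset ℝ →+ ℕ := ⟨⟨Multiset.card, Multiset.card_zero⟩, Multiset.card_add⟩
    have hcs := map_sum f (fun i => Multiset.replicate (L.get i) (μ i)) Finset.univ
    have hf : ∀ m : Multiset ℝ, f m = Multiset.card m := fun m => rfl
    rw [hf] at hcs
    rw [hcs] at this
    simp only [hf, Multiset.card_replicate] at this
    rw [my_list_sum] at this
    omega
  -- L nonempty
  have hlen : 0 < L.length := by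
    rcases L with - | ⟨a, t⟩
    · simp at hcard; omega
    · simp
  -- all μ i are roots
  have hmu_mem : ∀ i, μ i ∈ A.charpoly.roots := by
    intro i
    rw [hroots]
    apply Multiset.mem_sum.mpr
    refine ⟨i, Finset.mem_univ i, Multiset.mem_replicate.mpr ⟨?_, rfl⟩⟩
    have hm : L.get i ∈ L := by
      have := List.get_mem L i
      simpa using this
    exact (hpos _ hm).ne'
  have hroots_nonneg : ∀ y ∈ A.charpoly.roots, (0:ℝ) ≤ y := by
    intro y hy
    rw [hchar] at hy
    obtain ⟨k, -, rfl⟩ := Multiset.mem_map.mp hy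
    exact hev_nonneg k
  -- 0 is a root
  have h0mem : (0:ℝ) ∈ A.charpoly.roots := by
    rw [← Multiset.count_pos, hcount]; norm_num
  -- μ 0 = 0
  have hmu0 : μ ⟨0, hlen⟩ = 0 := by
    rw [hroots] at h0mem
    obtain ⟨i, -, hi⟩ := Multiset.mem_sum.mp h0mem
    have h0i : (0:ℝ) = μ i := (Multiset.mem_replicate.mp hi).2
    by_cases hi0 : i = ⟨0, hlen⟩
    · rw [← hi0]; exact h0i.symm
    · exfalso
      have hlt : (⟨0, hlen⟩ : Fin L.length) < i := by
        have hv : 0 < i.val := Nat.pos_of_ne_zero (fun h => hi0 (Fin.ext h))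
        exact hv
      have := hmono hlt
      rw [← h0i] at this
      have := hroots_nonneg _ (hmu_mem ⟨0, hlen⟩)
      linarith
  -- L.get 0 = 1
  have hget0 : L.get ⟨0, hlen⟩ = 1 := by
    have hc := hcount
    rw [hroots, Multiset.count_sum'] at hc
    have : ∀ i : Fin L.length,
        Multiset.count 0 (Multiset.replicate (L.get i) (μ i))
        = if i = ⟨0, hlen⟩ then L.get ⟨0, hlen⟩ else 0 := by
      intro i
      rw [Multiset.count_replicate]
      by_cases hi : i = ⟨0, hlen⟩
      · rw [if_pos hi, if_pos (by rw [hi, hmu0]), hi]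
      · rw [if_neg hi, if_neg]
        intro hμ
        apply hi
        have : μ i = μ ⟨0, hlen⟩ := by rw [hμ, hmu0]
        exact hmono.injective this
    rw [Finset.sum_congr rfl (fun i _ => this i), Finset.sum_ite_eq'] at hc
    rw [if_pos (Finset.mem_univ _)] at hc
    omega
  refine ⟨hpos, ?_, hcard⟩
  rcases L with - | ⟨a, t⟩
  · simp at hlen
  · rw [show ((a :: t).get ⟨0, hlen⟩) = a from rfl] at hget0
    rw [hget0]
    rfl

/-- For `n ≥ 2`, the ordered multiplicity lists realized by generalized Laplacian matrices
of `Kₙ` are exactly the lists `(m₁, …, m_q)` of positive integers with `m₁ = 1` and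
`m₁ + ⋯ + m_q = n`. -/
theorem stmt7 (n : ℕ) (hn : 2 ≤ n) (L : List ℕ) :
    RealizesOML (⊤ : SimpleGraph (Fin n)) L ↔
      ((∀ m ∈ L, 0 < m) ∧ L.head? = some 1 ∧ L.sum = n) := by
  constructor
  · exact forward_dir n hn L
  · rintro ⟨h1, h2, h3⟩
    exact reverse_dir n hn L h1 h2 h3
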